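/- If φ ∈ S(n,m) satisfies condition (C) at e_1 (with φ having K-limit e_1 there after rotations), then the directional derivative D_1 φ_1(z) (derivative of the first component in the e_1 direction) has K-limit L at e_1, where L = liminf_{z→e_1}(1-|φ(z)|^2)/(1-|z|^2). -/

import Mathlib

open Metric Filter Topology
open scoped ComplexConjugate ComplexOrder

local notation "⟪" x ", " y "⟫" => @inner ℂ _ _ x y

/-- The Schur–Agler positivity condition for `φ : Bⁿ → Bᵐ`. -/
def SchurAglerKernelPos {n m : ℕ}
    (φ : EuclideanSpace ℂ (Fin n) → EuclideanSpace ℂ (Fin m)) : Prop :=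
  ∀ (N : ℕ) (zs : Fin N → EuclideanSpace ℂ (Fin n)),
    (∀ i, zs i ∈ ball (0 : EuclideanSpace ℂ (Fin n)) 1) →
    ∀ c : Fin N → ℂ,
      0 ≤ ∑ i, ∑ j, c i * conj (c j) *
        ((1 - ⟪φ (zs j), φ (zs i)⟫) / (1 - ⟪zs j, zs i⟫))

/-- The Koranyi region `D_α(ζ) = {z ∈ Bⁿ : |1 - ⟨z,ζ⟩| ≤ (α/2)(1-‖z‖²)}`. -/
def Koranyi {n : ℕ} (α : ℝ) (ζ : EuclideanSpace ℂ (Fin n)) :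
    Set (EuclideanSpace ℂ (Fin n)) :=
  {z | z ∈ ball (0 : EuclideanSpace ℂ (Fin n)) 1 ∧
    ‖1 - ⟪ζ, z⟫‖ ≤ α / 2 * (1 - ‖z‖ ^ 2)}

/-- `f` has K-limit `L` at `ζ`: `f(z) → L` as `z → ζ` within every Koranyi region. -/
def HasKLimit {n : ℕ} {X : Type*} [TopologicalSpace X]
    (f : EuclideanSpace ℂ (Fin n) → X) (ζ : EuclideanSpace ℂ (Fin n)) (L : X) : Prop :=
  ∀ α > (0 : ℝ), Tendsto f (𝓝[Koranyi α ζ] ζ) (𝓝 L)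

/-!
Positivity of the Schur–Agler kernel `K(a, b) = (1 - ⟨φ a, φ b⟩) / (1 - ⟨a, b⟩)` gives
Cauchy–Schwarz inequalities between its values at two and at three points. Let one of the
points tend to `e₁` along an ultrafilter on which `(1 - ‖φ z‖²) / (1 - ‖z‖²) → L` and
`φ → η`. The two-point inequality becomes `|1 - ⟨η, φ z⟩|² ≤ L (1 - ‖φ z‖²)/(1 - ‖z‖²) |1 - z₁|²`;
along the radius `t e₁` this forces `⟨η, e₁⟩ = 1`, so `η = e₁`, and what remains is Julia's
inequality `|h z|² ≤ L (1 - ‖φ z‖²)/(1 - ‖z‖²)` for `h z = (1 - φ₁ z) / (1 - z₁)`. Julia's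
inequality bounds `h` and the quotient on each Koranyi region and gives `h (t e₁) → L`; the
three-point inequality then compares `h z` with `K(w, z)` for a radial point `w` near `e₁`,
which yields the K-limit of `h`. Finally `D₁φ₁ z = h z - (1 - z₁) ∂₁h z`; the complex line
through `z` in direction `e₁` meets a wider Koranyi region in a disc of radius comparable to
`|1 - z₁|`, so the Cauchy estimate there makes the second term small.
-/

open Set

local notation "𝔼" d:max => EuclideanSpace ℂ (Fin d)

section General

variable {E : Type*} [NormedAddCommGroup E] [InnerProductSpace ℂ E]

theorem le_of_sq_le_mul {a c : ℝ} (hc : 0 ≤ c) (h : a ^ 2 ≤ c * a) : a ≤ c := by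
  nlinarith

theorem norm_sq_le_mul_of_forall_nonneg {A C : ℝ} {B : ℂ}
    (h : ∀ a : ℂ, 0 ≤ ‖a‖ ^ 2 * A + 2 * (a * B).re + C) : ‖B‖ ^ 2 ≤ A * C := by
  have hB : ∀ t : ℝ, 0 ≤ (‖B‖ ^ 2 * A) * (t * t) + 2 * ‖B‖ ^ 2 * t + C := fun t => by
    have := h (t * conj B)
    rw [mul_assoc, Complex.conj_mul', norm_mul, Complex.norm_conj, Complex.norm_real,
      Real.norm_eq_abs, mul_pow, sq_abs] at this
    simp only [← Complex.ofReal_pow, ← Complex.ofReal_mul, Complex.ofReal_re] at this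
    linarith
  have h0 : ∀ t : ℝ, 0 ≤ A * (t * t) + 2 * B.re * t + C := fun t => by
    have := h t
    rw [Complex.norm_real, Real.norm_eq_abs, sq_abs, Complex.re_ofReal_mul] at this
    linarith
  have d1 := discrim_le_zero hB
  have d0 := discrim_le_zero h0
  unfold discrim at d0 d1
  rcases (norm_nonneg B).eq_or_lt with hB0 | hBpos
  · rw [← hB0]; nlinarith
  · nlinarith [pow_pos hBpos 2]

theorem one_sub_norm_one_sub_mul_ofReal_sq (x : ℂ) (s : ℝ) :
    1 - ‖1 - x * s‖ ^ 2 = 2 * s * x.re - s ^ 2 * ‖x‖ ^ 2 := by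
  simp only [Complex.sq_norm, Complex.normSq_apply, Complex.sub_re, Complex.sub_im,
    Complex.mul_re, Complex.mul_im, Complex.ofReal_re, Complex.ofReal_im, Complex.one_re,
    Complex.one_im]
  ring

theorem one_sub_inner_ne_zero {x y : E} (hxy : ‖x‖ * ‖y‖ < 1) : 1 - ⟪x, y⟫ ≠ 0 := by
  intro h
  have : ‖⟪x, y⟫‖ < 1 := (norm_inner_le_norm x y).trans_lt hxy
  rw [← sub_eq_zero.mp h, norm_one] at this
  exact this.false

theorem one_sub_norm_sq_le_two_mul_norm_one_sub_inner {x y : E} (hx : ‖x‖ ≤ 1) (hy : ‖y‖ ≤ 1) :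
    1 - ‖x‖ ^ 2 ≤ 2 * ‖1 - ⟪y, x⟫‖ := by
  have hinner : ‖⟪y, x⟫‖ ≤ ‖x‖ :=
    (norm_inner_le_norm y x).trans (by nlinarith [norm_nonneg x, norm_nonneg y])
  have htri : 1 - ‖⟪y, x⟫‖ ≤ ‖1 - ⟪y, x⟫‖ := by
    simpa using norm_sub_norm_le (1 : ℂ) ⟪y, x⟫
  nlinarith [norm_nonneg x]

theorem tendsto_of_forall_exists_approx {ι X : Type*} [PseudoMetricSpace X] {l : Filter ι}
    {f : ι → X} {c : X}
    (h : ∀ ε > 0, ∃ (g : ι → X) (c' : X), dist c' c < ε ∧ Tendsto g l (𝓝 c') ∧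
      ∀ᶠ x in l, dist (f x) (g x) ≤ ε) :
    Tendsto f l (𝓝 c) := by
  refine Metric.tendsto_nhds.mpr fun ε hε => ?_
  obtain ⟨g, c', hc, hg, hfg⟩ := h (ε / 3) (by positivity)
  filter_upwards [hfg, Metric.tendsto_nhds.mp hg _ (by positivity : 0 < ε / 3)] with x h1 h2
  linarith [dist_triangle4 (f x) (g x) c' c]

end General

section SchurKernel

variable {d d' : ℕ} (φ : 𝔼 d → 𝔼 d')

noncomputable def schurKernel (a b : 𝔼 d) : ℂ := (1 - ⟪φ a, φ b⟫) / (1 - ⟪a, b⟫)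

noncomputable def juliaQuotient (z : 𝔼 d) : ℝ := (1 - ‖φ z‖ ^ 2) / (1 - ‖z‖ ^ 2)

theorem schurKernel_self (a : 𝔼 d) : schurKernel φ a a = juliaQuotient φ a := by
  simp only [schurKernel, juliaQuotient, inner_self_eq_norm_sq_to_K]
  push_cast
  rfl

theorem conj_schurKernel (a b : 𝔼 d) : conj (schurKernel φ a b) = schurKernel φ b a := by
  simp only [schurKernel, map_div₀, map_sub, map_one, inner_conj_symm]

variable {φ} in
theorem juliaQuotient_nonneg {z : 𝔼 d} (hz : ‖z‖ < 1) (hφz : ‖φ z‖ ≤ 1) :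
    0 ≤ juliaQuotient φ z :=
  div_nonneg (by nlinarith [norm_nonneg (φ z)]) (by nlinarith [norm_nonneg z])

noncomputable def schurForm {N : ℕ} (p : Fin N → 𝔼 d) (u v : Fin N → ℂ) : ℂ :=
  ∑ i, ∑ j, u i * conj (v j) * schurKernel φ (p j) (p i)

variable {N : ℕ} (p : Fin N → 𝔼 d)

theorem schurForm_swap (u v : Fin N → ℂ) : schurForm φ p v u = conj (schurForm φ p u v) := by
  simp only [schurForm, map_sum, map_mul, conj_schurKernel, Complex.conj_conj]
  rw [Finset.sum_comm]
  exact Finset.sum_congr rfl fun _ _ => Finset.sum_congr rfl fun _ _ => by ring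

theorem schurForm_smul_add (a : ℂ) (u v : Fin N → ℂ) :
    schurForm φ p (a • u + v) (a • u + v) = a * conj a * schurForm φ p u u
      + a * schurForm φ p u v + conj a * schurForm φ p v u + schurForm φ p v v := by
  simp only [schurForm, Pi.add_apply, Pi.smul_apply, smul_eq_mul, map_add, map_mul,
    Finset.mul_sum, ← Finset.sum_add_distrib]
  exact Finset.sum_congr rfl fun _ _ => Finset.sum_congr rfl fun _ _ => by ring

variable {φ p}

theorem norm_schurForm_sq_le (hpsd : SchurAglerKernelPos φ)
    (hp : ∀ i, p i ∈ ball (0 : 𝔼 d) 1) (u v : Fin N → ℂ) :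
    ‖schurForm φ p u v‖ ^ 2 ≤ (schurForm φ p u u).re * (schurForm φ p v v).re := by
  refine norm_sq_le_mul_of_forall_nonneg fun a => ?_
  have h := (Complex.nonneg_iff.mp (hpsd N p hp (a • u + v))).1
  have hre : (schurForm φ p (a • u + v) (a • u + v)).re = ‖a‖ ^ 2 * (schurForm φ p u u).re
      + 2 * (a * schurForm φ p u v).re + (schurForm φ p v v).re := by
    rw [schurForm_smul_add, schurForm_swap φ p u v, Complex.mul_conj', ← map_mul]
    simp only [Complex.add_re, Complex.conj_re, Complex.re_ofReal_mul, ← Complex.ofReal_pow]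
    ring
  exact hre ▸ h

theorem norm_schurKernel_sq_le (hpsd : SchurAglerKernelPos φ) {a b : 𝔼 d}
    (ha : a ∈ ball (0 : 𝔼 d) 1) (hb : b ∈ ball (0 : 𝔼 d) 1) :
    ‖schurKernel φ b a‖ ^ 2 ≤ juliaQuotient φ a * juliaQuotient φ b := by
  have h := norm_schurForm_sq_le hpsd (p := ![a, b]) (Fin.forall_fin_two.mpr ⟨ha, hb⟩)
    ![1, 0] ![0, 1]
  simpa [schurForm, Fin.sum_univ_two, schurKernel_self] using h

theorem norm_schurKernel_sub_sq_le (hpsd : SchurAglerKernelPos φ) {a b c : 𝔼 d}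
    (ha : a ∈ ball (0 : 𝔼 d) 1) (hb : b ∈ ball (0 : 𝔼 d) 1) (hc : c ∈ ball (0 : 𝔼 d) 1) :
    ‖schurKernel φ c a - schurKernel φ c b‖ ^ 2 ≤
      (juliaQuotient φ a - (schurKernel φ b a).re - (schurKernel φ a b).re + juliaQuotient φ b)
        * juliaQuotient φ c := by
  have h := norm_schurForm_sq_le hpsd (p := ![a, b, c])
    (Fin.forall_fin_succ.mpr ⟨ha, Fin.forall_fin_two.mpr ⟨hb, hc⟩⟩) ![1, -1, 0] ![0, 0, 1]
  simp only [schurForm, Fin.sum_univ_three, schurKernel_self] at h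
  simpa [sub_eq_add_neg, add_assoc] using h

end SchurKernel

-- With `f = ⟪e₁, φ ·⟫` and `ζ = e₁` this is the paper's `h z = (1 - φ₁ z) / (1 - z₁)`.
noncomputable def diffQuotient {d : ℕ} (f : 𝔼 d → ℂ) (ζ z : 𝔼 d) : ℂ := (1 - f z) / (1 - ⟪ζ, z⟫)

section Boundary

variable {d d' : ℕ} {φ : 𝔼 d → 𝔼 d'} {ζ z : 𝔼 d} {η : 𝔼 d'} {L : ℝ}

theorem juliaQuotient_eventually_nonneg
    (hφmap : ∀ z ∈ ball (0 : 𝔼 d) 1, φ z ∈ ball (0 : 𝔼 d') 1) :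
    ∀ᶠ z in 𝓝[ball (0 : 𝔼 d) 1] ζ, 0 ≤ juliaQuotient φ z :=
  eventually_nhdsWithin_of_forall fun z hz =>
    juliaQuotient_nonneg (mem_ball_zero_iff.mp hz) (mem_ball_zero_iff.mp (hφmap z hz)).le

theorem exists_ultrafilter_tendsto_juliaQuotient
    (hφmap : ∀ z ∈ ball (0 : 𝔼 d) 1, φ z ∈ ball (0 : 𝔼 d') 1) (hζ : ‖ζ‖ = 1)
    (hfin : ∃ C : ℝ, ∃ᶠ z in 𝓝[ball (0 : 𝔼 d) 1] ζ, juliaQuotient φ z ≤ C)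
    (hL : liminf (juliaQuotient φ) (𝓝[ball (0 : 𝔼 d) 1] ζ) = L) :
    ∃ (U : Ultrafilter (𝔼 d)) (η : 𝔼 d'), ↑U ≤ 𝓝[ball (0 : 𝔼 d) 1] ζ ∧ ‖η‖ ≤ 1 ∧
      Tendsto (juliaQuotient φ) U (𝓝 L) ∧ Tendsto φ U (𝓝 η) := by
  have : (𝓝[ball (0 : 𝔼 d) 1] ζ).NeBot := mem_closure_iff_nhdsWithin_neBot.mp <| by
    rw [closure_ball _ one_ne_zero, mem_closedBall_zero_iff, hζ]
  obtain ⟨C, hC⟩ := hfin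
  have hcobdd : IsCoboundedUnder (· ≥ ·) (𝓝[ball (0 : 𝔼 d) 1] ζ) (juliaQuotient φ) :=
    ⟨C, fun a ha => by
      obtain ⟨z, hzC, hza⟩ := (hC.and_eventually (eventually_map.mp ha)).exists
      exact hza.trans hzC⟩
  have hcluster := MapClusterPt.liminf hcobdd
    (isBoundedUnder_of_eventually_ge (juliaQuotient_eventually_nonneg hφmap))
  rw [hL, mapClusterPt_iff_ultrafilter] at hcluster
  obtain ⟨U, hU, hUq⟩ := hcluster
  have hUφ : ↑(U.map φ) ≤ 𝓟 (closedBall (0 : 𝔼 d') 1) := by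
    rw [Ultrafilter.coe_map, le_principal_iff]
    exact mem_map.mpr (mem_of_superset (hU self_mem_nhdsWithin) fun z hz =>
      ball_subset_closedBall (hφmap z hz))
  obtain ⟨η, hη, hUη⟩ := (isCompact_closedBall (0 : 𝔼 d') 1).ultrafilter_le_nhds _ hUφ
  exact ⟨U, η, hU, mem_closedBall_zero_iff.mp hη, hUq, hUη⟩

theorem diffQuotient_mul_one_sub_inner {f : 𝔼 d → ℂ} (hζ : ‖ζ‖ ≤ 1) (hz : ‖z‖ < 1) :
    diffQuotient f ζ z * (1 - ⟪ζ, z⟫) = 1 - f z :=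
  div_mul_cancel₀ _ (one_sub_inner_ne_zero (mul_lt_one_of_nonneg_of_lt_one_right hζ
    (norm_nonneg _) hz))

theorem tendsto_schurKernel {l : Filter (𝔼 d)} (hl : l ≤ 𝓝 ζ) (hlφ : Tendsto φ l (𝓝 η))
    (hζ : ‖ζ‖ ≤ 1) (hz : ‖z‖ < 1) :
    Tendsto (schurKernel φ z) l (𝓝 (conj (diffQuotient (fun w => ⟪η, φ w⟫) ζ z))) := by
  have hden : 1 - ⟪z, ζ⟫ ≠ 0 :=
    one_sub_inner_ne_zero (mul_lt_one_of_nonneg_of_lt_one_left (norm_nonneg _) hz hζ)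
  simp only [diffQuotient, map_div₀, map_sub, map_one, inner_conj_symm]
  exact ((tendsto_const_nhds.inner hlφ).const_sub 1).div
    ((tendsto_const_nhds.inner hl).const_sub 1) hden

theorem norm_diffQuotient_sq_le (hpsd : SchurAglerKernelPos φ) (hζ : ‖ζ‖ ≤ 1)
    {U : Filter (𝔼 d)} [U.NeBot] (hU : U ≤ 𝓝[ball (0 : 𝔼 d) 1] ζ)
    (hUq : Tendsto (juliaQuotient φ) U (𝓝 L)) (hUφ : Tendsto φ U (𝓝 η))
    (hz : z ∈ ball (0 : 𝔼 d) 1) :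
    ‖diffQuotient (fun w => ⟪η, φ w⟫) ζ z‖ ^ 2 ≤ L * juliaQuotient φ z := by
  have hK := tendsto_schurKernel (hU.trans nhdsWithin_le_nhds) hUφ hζ (mem_ball_zero_iff.mp hz)
  rw [← Complex.norm_conj]
  refine le_of_tendsto_of_tendsto (hK.norm.pow 2) (hUq.mul_const _) ?_
  filter_upwards [hU self_mem_nhdsWithin] with y hy
  exact norm_schurKernel_sq_le hpsd hy hz

end Boundary

section Radial

variable {d d' : ℕ} {φ : 𝔼 d → 𝔼 d'} {ζ : 𝔼 d} {ω η : 𝔼 d'} {L t : ℝ}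

theorem norm_ofReal_smul (hζ : ‖ζ‖ = 1) (t : ℝ) : ‖(t : ℂ) • ζ‖ = |t| := by
  rw [norm_smul, hζ, mul_one, Complex.norm_real, Real.norm_eq_abs]

theorem inner_ofReal_smul_self (hζ : ‖ζ‖ = 1) (t : ℝ) : ⟪ζ, (t : ℂ) • ζ⟫ = t := by
  rw [inner_smul_right, inner_self_eq_norm_sq_to_K, hζ]
  simp

theorem norm_one_sub_inner_ofReal_smul (hζ : ‖ζ‖ = 1) (ht : t ≤ 1) :
    ‖1 - ⟪ζ, (t : ℂ) • ζ⟫‖ = 1 - t := by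
  rw [inner_ofReal_smul_self hζ, ← Complex.ofReal_one, ← Complex.ofReal_sub, Complex.norm_real,
    Real.norm_eq_abs, abs_of_nonneg (sub_nonneg.mpr ht)]

theorem ofReal_smul_mem_koranyi (hζ : ‖ζ‖ = 1) (ht : t ∈ Ioo 0 1) :
    (t : ℂ) • ζ ∈ Koranyi 2 ζ := by
  refine ⟨mem_ball_zero_iff.mpr ?_, ?_⟩
  · rw [norm_ofReal_smul hζ, abs_of_pos ht.1]
    exact ht.2
  · rw [norm_one_sub_inner_ofReal_smul hζ ht.2.le, norm_ofReal_smul hζ, sq_abs]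
    nlinarith [ht.1, ht.2]

theorem tendsto_ofReal_smul_koranyi (hζ : ‖ζ‖ = 1) :
    Tendsto (fun t : ℝ => (t : ℂ) • ζ) (𝓝[<] 1) (𝓝[Koranyi 2 ζ] ζ) := by
  refine tendsto_nhdsWithin_iff.mpr ⟨?_, ?_⟩
  · refine ((Complex.continuous_ofReal.smul continuous_const).tendsto' 1 ζ ?_).mono_left
      nhdsWithin_le_nhds
    simp
  · filter_upwards [Ioo_mem_nhdsLT zero_lt_one] with t ht using ofReal_smul_mem_koranyi hζ ht

theorem norm_one_sub_inner_ofReal_smul_le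
    (hφmap : ∀ z ∈ ball (0 : 𝔼 d) 1, φ z ∈ ball (0 : 𝔼 d') 1)
    (hζ : ‖ζ‖ = 1) (hη : ‖η‖ ≤ 1) (hL0 : 0 ≤ L)
    (hJ : ∀ z ∈ ball (0 : 𝔼 d) 1,
      ‖diffQuotient (fun w => ⟪η, φ w⟫) ζ z‖ ^ 2 ≤ L * juliaQuotient φ z)
    (ht : t ∈ Ioo 0 1) :
    ‖1 - ⟪η, φ ((t : ℂ) • ζ)⟫‖ ≤ 2 * L * (1 - t) / (1 + t) := by
  set z := (t : ℂ) • ζ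
  have hz : z ∈ ball (0 : 𝔼 d) 1 := (ofReal_smul_mem_koranyi hζ ht).1
  have hq : juliaQuotient φ z * (1 - t ^ 2) ≤ 2 * ‖1 - ⟪η, φ z⟫‖ := by
    have hden : 1 - ‖z‖ ^ 2 = 1 - t ^ 2 := by rw [norm_ofReal_smul hζ, sq_abs]
    rw [juliaQuotient, hden, div_mul_cancel₀ _ (by nlinarith [ht.1, ht.2])]
    exact one_sub_norm_sq_le_two_mul_norm_one_sub_inner (mem_ball_zero_iff.mp (hφmap z hz)).le hη
  have hG : ‖1 - ⟪η, φ z⟫‖ = ‖diffQuotient (fun w => ⟪η, φ w⟫) ζ z‖ * (1 - t) := by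
    rw [← norm_one_sub_inner_ofReal_smul hζ ht.2.le, ← norm_mul,
      diffQuotient_mul_one_sub_inner hζ.le (mem_ball_zero_iff.mp hz)]
  have hc : 0 ≤ L * (1 - t) / (1 + t) :=
    div_nonneg (mul_nonneg hL0 (by linarith [ht.2])) (by linarith [ht.1])
  refine le_of_sq_le_mul (by rw [mul_assoc, mul_div_assoc]; positivity) ?_
  calc ‖1 - ⟪η, φ z⟫‖ ^ 2 ≤ L * juliaQuotient φ z * (1 - t) ^ 2 := by
        rw [hG, mul_pow]
        exact mul_le_mul_of_nonneg_right (hJ z hz) (sq_nonneg _)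
    _ = L * (1 - t) / (1 + t) * (juliaQuotient φ z * (1 - t ^ 2)) := by
        field_simp [show (1 + t) ≠ 0 by linarith [ht.1]]
        ring
    _ ≤ L * (1 - t) / (1 + t) * (2 * ‖1 - ⟪η, φ z⟫‖) := mul_le_mul_of_nonneg_left hq hc
    _ = 2 * L * (1 - t) / (1 + t) * ‖1 - ⟪η, φ z⟫‖ := by ring

theorem eq_of_forall_norm_diffQuotient_sq_le
    (hφmap : ∀ z ∈ ball (0 : 𝔼 d) 1, φ z ∈ ball (0 : 𝔼 d') 1)
    (hζ : ‖ζ‖ = 1) (hω : ‖ω‖ = 1) (hη : ‖η‖ ≤ 1) (hL0 : 0 ≤ L)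
    (hrad : Tendsto (fun t : ℝ => φ ((t : ℂ) • ζ)) (𝓝[<] 1) (𝓝 ω))
    (hJ : ∀ z ∈ ball (0 : 𝔼 d) 1,
      ‖diffQuotient (fun w => ⟪η, φ w⟫) ζ z‖ ^ 2 ≤ L * juliaQuotient φ z) :
    η = ω := by
  have hc : ContinuousAt (fun t : ℝ => 2 * L * (1 - t) / (1 + t)) 1 :=
    (continuous_const.mul (continuous_const.sub continuous_id)).continuousAt.div
      (continuous_const.add continuous_id).continuousAt (by norm_num)
  have hlim : Tendsto (fun t : ℝ => 2 * L * (1 - t) / (1 + t)) (𝓝[<] 1) (𝓝 0) := by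
    simpa using hc.tendsto.mono_left nhdsWithin_le_nhds
  have hle := le_of_tendsto_of_tendsto ((tendsto_const_nhds.inner hrad).const_sub 1).norm hlim
    (eventually_of_mem (Ioo_mem_nhdsLT zero_lt_one) fun t ht =>
      norm_one_sub_inner_ofReal_smul_le hφmap hζ hη hL0 hJ ht)
  have hinner : ⟪η, ω⟫ = 1 := (sub_eq_zero.mp (norm_le_zero_iff.mp hle)).symm
  have hη1 : ‖η‖ = 1 := le_antisymm hη <| by
    simpa [hinner, hω] using norm_inner_le_norm (𝕜 := ℂ) η ω
  exact (inner_eq_one_iff_of_norm_eq_one hη1 hω).mp hinner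

theorem one_add_mul_juliaQuotient_le (hζ : ‖ζ‖ = 1) (hω : ‖ω‖ ≤ 1) (ht : t ∈ Ioo 0 1) :
    (1 + t) * juliaQuotient φ ((t : ℂ) • ζ) ≤
      2 * (diffQuotient (fun w => ⟪ω, φ w⟫) ζ ((t : ℂ) • ζ)).re := by
  set z := (t : ℂ) • ζ
  set h := diffQuotient (fun w => ⟪ω, φ w⟫) ζ z
  have hz : ‖z‖ < 1 := mem_ball_zero_iff.mp (ofReal_smul_mem_koranyi hζ ht).1
  have hinner : ⟪ω, φ z⟫ = 1 - h * (1 - t : ℝ) := by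
    rw [Complex.ofReal_sub, Complex.ofReal_one, ← inner_ofReal_smul_self hζ,
      diffQuotient_mul_one_sub_inner hζ.le hz, sub_sub_cancel]
  have hφz : 1 - ‖φ z‖ ^ 2 ≤ 1 - ‖⟪ω, φ z⟫‖ ^ 2 := by
    have := (norm_inner_le_norm (𝕜 := ℂ) ω (φ z)).trans (mul_le_of_le_one_left (norm_nonneg _) hω)
    nlinarith [norm_nonneg ⟪ω, φ z⟫]
  rw [hinner, one_sub_norm_one_sub_mul_ofReal_sq] at hφz
  have hden : 1 - ‖z‖ ^ 2 = (1 - t) * (1 + t) := by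
    rw [norm_ofReal_smul hζ, sq_abs]
    ring
  rw [juliaQuotient, hden, ← div_div, mul_div_cancel₀ _ (by linarith [ht.1]),
    div_le_iff₀ (by linarith [ht.2])]
  nlinarith [sq_nonneg ((1 - t) * ‖h‖)]

theorem norm_diffQuotient_mul_le (hζ : ‖ζ‖ = 1) (hω : ‖ω‖ ≤ 1) (hL0 : 0 ≤ L)
    (hjulia : ∀ z ∈ ball (0 : 𝔼 d) 1,
      ‖diffQuotient (fun w => ⟪ω, φ w⟫) ζ z‖ ^ 2 ≤ L * juliaQuotient φ z)
    (ht : t ∈ Ioo 0 1) :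
    ‖diffQuotient (fun w => ⟪ω, φ w⟫) ζ ((t : ℂ) • ζ)‖ * (1 + t) ≤ 2 * L := by
  set z := (t : ℂ) • ζ
  set h := diffQuotient (fun w => ⟪ω, φ w⟫) ζ z
  have ht0 : 0 ≤ 1 + t := by linarith [ht.1]
  refine le_of_sq_le_mul (by positivity) ?_
  calc (‖h‖ * (1 + t)) ^ 2 = ‖h‖ ^ 2 * (1 + t) ^ 2 := by ring
    _ ≤ L * juliaQuotient φ z * (1 + t) ^ 2 :=
        mul_le_mul_of_nonneg_right (hjulia z (ofReal_smul_mem_koranyi hζ ht).1) (sq_nonneg _)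
    _ = L * (1 + t) * ((1 + t) * juliaQuotient φ z) := by ring
    _ ≤ L * (1 + t) * (2 * ‖h‖) := mul_le_mul_of_nonneg_left
        ((one_add_mul_juliaQuotient_le hζ hω ht).trans
          (by linarith [Complex.re_le_norm h])) (by positivity)
    _ = 2 * L * (‖h‖ * (1 + t)) := by ring

theorem tendsto_juliaQuotient_ofReal_smul
    (hφmap : ∀ z ∈ ball (0 : 𝔼 d) 1, φ z ∈ ball (0 : 𝔼 d') 1)
    (hζ : ‖ζ‖ = 1) (hω : ‖ω‖ ≤ 1) (hL0 : 0 ≤ L)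
    (hL : liminf (juliaQuotient φ) (𝓝[ball (0 : 𝔼 d) 1] ζ) = L)
    (hjulia : ∀ z ∈ ball (0 : 𝔼 d) 1,
      ‖diffQuotient (fun w => ⟪ω, φ w⟫) ζ z‖ ^ 2 ≤ L * juliaQuotient φ z) :
    Tendsto (fun t : ℝ => juliaQuotient φ ((t : ℂ) • ζ)) (𝓝[<] 1) (𝓝 L) := by
  have hrad : Tendsto (fun t : ℝ => (t : ℂ) • ζ) (𝓝[<] 1) (𝓝[ball (0 : 𝔼 d) 1] ζ) :=
    (tendsto_ofReal_smul_koranyi hζ).mono_right (nhdsWithin_mono _ fun z hz => hz.1)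
  have hupper : ∀ t ∈ Ioo (0 : ℝ) 1, juliaQuotient φ ((t : ℂ) • ζ) ≤ 4 * L / (1 + t) ^ 2 := by
    intro t ht
    have h1 := one_add_mul_juliaQuotient_le (φ := φ) hζ hω ht
    have h2 := norm_diffQuotient_mul_le hζ hω hL0 hjulia ht
    have h3 := Complex.re_le_norm (diffQuotient (fun w => ⟪ω, φ w⟫) ζ ((t : ℂ) • ζ))
    rw [le_div_iff₀ (by nlinarith [ht.1])]
    nlinarith [ht.1]
  have hc : ContinuousAt (fun t : ℝ => 4 * L / (1 + t) ^ 2) 1 :=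
    continuousAt_const.div ((continuous_const.add continuous_id).pow 2).continuousAt
      (by norm_num)
  have hlim : Tendsto (fun t : ℝ => 4 * L / (1 + t) ^ 2) (𝓝[<] 1) (𝓝 L) := by
    convert hc.tendsto.mono_left nhdsWithin_le_nhds using 2
    norm_num
  refine tendsto_order.mpr ⟨fun b hb => ?_, fun b hb => ?_⟩
  · exact hrad.eventually (eventually_lt_of_lt_liminf (hL ▸ hb)
      (isBoundedUnder_of_eventually_ge (juliaQuotient_eventually_nonneg hφmap)))
  · filter_upwards [eventually_of_mem (Ioo_mem_nhdsLT zero_lt_one) hupper,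
      hlim.eventually (gt_mem_nhds hb)] with t h1 h2 using h1.trans_lt h2

theorem tendsto_diffQuotient_ofReal_smul (hζ : ‖ζ‖ = 1) (hω : ‖ω‖ ≤ 1) (hL0 : 0 ≤ L)
    (hjulia : ∀ z ∈ ball (0 : 𝔼 d) 1,
      ‖diffQuotient (fun w => ⟪ω, φ w⟫) ζ z‖ ^ 2 ≤ L * juliaQuotient φ z)
    (hq : Tendsto (fun t : ℝ => juliaQuotient φ ((t : ℂ) • ζ)) (𝓝[<] 1) (𝓝 L)) :
    Tendsto (fun t : ℝ => diffQuotient (fun w => ⟪ω, φ w⟫) ζ ((t : ℂ) • ζ)) (𝓝[<] 1)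
      (𝓝 (L : ℂ)) := by
  set h := fun t : ℝ => diffQuotient (fun w => ⟪ω, φ w⟫) ζ ((t : ℂ) • ζ)
  have hbound : ∀ t ∈ Ioo (0 : ℝ) 1, ‖h t - L‖ ^ 2 ≤
      4 * L ^ 2 / (1 + t) ^ 2 - L * (1 + t) * juliaQuotient φ ((t : ℂ) • ζ) + L ^ 2 := by
    intro t ht
    have h1 : (1 + t) * juliaQuotient φ ((t : ℂ) • ζ) ≤ 2 * (h t).re :=
      one_add_mul_juliaQuotient_le hζ hω ht
    have h2 : ‖h t‖ * (1 + t) ≤ 2 * L := norm_diffQuotient_mul_le hζ hω hL0 hjulia ht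
    have hsq : ‖h t - L‖ ^ 2 = ‖h t‖ ^ 2 - 2 * L * (h t).re + L ^ 2 := by
      simp only [Complex.sq_norm, Complex.normSq_apply, Complex.sub_re, Complex.sub_im,
        Complex.ofReal_re, Complex.ofReal_im]
      ring
    have h3 : ‖h t‖ ^ 2 ≤ 4 * L ^ 2 / (1 + t) ^ 2 := by
      rw [le_div_iff₀ (by nlinarith [ht.1])]
      nlinarith [pow_le_pow_left₀ (mul_nonneg (norm_nonneg _) (by linarith [ht.1])) h2 2]
    nlinarith [mul_le_mul_of_nonneg_left h1 hL0]
  have hw : Tendsto (fun t : ℝ =>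
      4 * L ^ 2 / (1 + t) ^ 2 - L * (1 + t) * juliaQuotient φ ((t : ℂ) • ζ) + L ^ 2)
      (𝓝[<] 1) (𝓝 0) := by
    have h1 : Tendsto (fun t : ℝ => 1 + t) (𝓝[<] 1) (𝓝 2) :=
      ((continuous_const.add continuous_id).tendsto' 1 2 (by norm_num)).mono_left
        nhdsWithin_le_nhds
    have hlim := (((tendsto_const_nhds (x := 4 * L ^ 2)).div (h1.pow 2) (by norm_num)).sub
      (((tendsto_const_nhds (x := L)).mul h1).mul hq)).add (tendsto_const_nhds (x := L ^ 2))
    rwa [show 4 * L ^ 2 / 2 ^ 2 - L * 2 * L + L ^ 2 = 0 by ring] at hlim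
  have hsq : Tendsto (fun t => ‖h t - L‖ ^ 2) (𝓝[<] 1) (𝓝 0) :=
    squeeze_zero' (Eventually.of_forall fun _ => sq_nonneg _)
      (eventually_of_mem (Ioo_mem_nhdsLT zero_lt_one) hbound) hw
  refine tendsto_iff_norm_sub_tendsto_zero.mpr ?_
  simpa [Real.sqrt_sq (norm_nonneg _)] using hsq.sqrt

end Radial

section KoranyiLimit

variable {d d' : ℕ} {φ : 𝔼 d → 𝔼 d'} {ζ z w : 𝔼 d} {ω : 𝔼 d'} {L α : ℝ}

theorem norm_diffQuotient_sub_schurKernel_sq_le (hpsd : SchurAglerKernelPos φ) (hζ : ‖ζ‖ ≤ 1)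
    {U : Filter (𝔼 d)} [U.NeBot] (hU : U ≤ 𝓝[ball (0 : 𝔼 d) 1] ζ)
    (hUq : Tendsto (juliaQuotient φ) U (𝓝 L)) (hUφ : Tendsto φ U (𝓝 ω))
    (hz : z ∈ ball (0 : 𝔼 d) 1) (hw : w ∈ ball (0 : 𝔼 d) 1) :
    ‖diffQuotient (fun v => ⟪ω, φ v⟫) ζ z - schurKernel φ w z‖ ^ 2 ≤
      (L - 2 * (diffQuotient (fun v => ⟪ω, φ v⟫) ζ w).re + juliaQuotient φ w) *
        juliaQuotient φ z := by
  have hl := hU.trans nhdsWithin_le_nhds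
  have hKz := tendsto_schurKernel hl hUφ hζ (mem_ball_zero_iff.mp hz)
  have hKw := tendsto_schurKernel hl hUφ hζ (mem_ball_zero_iff.mp hw)
  have hKw' : Tendsto (fun y => schurKernel φ y w) U
      (𝓝 (diffQuotient (fun v => ⟪ω, φ v⟫) ζ w)) := by
    simpa only [Function.comp_def, conj_schurKernel, Complex.conj_conj] using
      (Complex.continuous_conj.tendsto _).comp hKw
  have hlim := le_of_tendsto_of_tendsto ((hKz.sub_const (schurKernel φ z w)).norm.pow 2)
    ((((hUq.sub ((Complex.continuous_re.tendsto _).comp hKw)).sub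
      ((Complex.continuous_re.tendsto _).comp hKw')).add_const (juliaQuotient φ w)).mul_const
        (juliaQuotient φ z)) ?_
  · rw [← conj_schurKernel φ w z, ← map_sub, Complex.norm_conj, Complex.conj_re] at hlim
    exact hlim.trans_eq (by ring)
  · filter_upwards [hU self_mem_nhdsWithin] with y hy
    exact norm_schurKernel_sub_sq_le hpsd hy hw hz

theorem juliaQuotient_le_of_mem_koranyi
    (hφmap : ∀ z ∈ ball (0 : 𝔼 d) 1, φ z ∈ ball (0 : 𝔼 d') 1)
    (hζ : ‖ζ‖ ≤ 1) (hω : ‖ω‖ ≤ 1) (hL0 : 0 ≤ L) (hα : 0 ≤ α)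
    (hjulia : ∀ z ∈ ball (0 : 𝔼 d) 1,
      ‖diffQuotient (fun v => ⟪ω, φ v⟫) ζ z‖ ^ 2 ≤ L * juliaQuotient φ z)
    (hz : z ∈ Koranyi α ζ) :
    juliaQuotient φ z ≤ α ^ 2 * L := by
  obtain ⟨hzb, hzK⟩ := hz
  set h := diffQuotient (fun v => ⟪ω, φ v⟫) ζ z
  have hs : 0 < 1 - ‖z‖ ^ 2 := by nlinarith [mem_ball_zero_iff.mp hzb, norm_nonneg z]
  have hq : juliaQuotient φ z ≤ α * ‖h‖ := by
    rw [juliaQuotient, div_le_iff₀ hs]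
    calc 1 - ‖φ z‖ ^ 2 ≤ 2 * ‖1 - ⟪ω, φ z⟫‖ :=
          one_sub_norm_sq_le_two_mul_norm_one_sub_inner (mem_ball_zero_iff.mp (hφmap z hzb)).le hω
      _ = 2 * ‖h‖ * ‖1 - ⟪ζ, z⟫‖ := by
          rw [mul_assoc, ← norm_mul, diffQuotient_mul_one_sub_inner hζ (mem_ball_zero_iff.mp hzb)]
      _ ≤ 2 * ‖h‖ * (α / 2 * (1 - ‖z‖ ^ 2)) := by gcongr
      _ = α * ‖h‖ * (1 - ‖z‖ ^ 2) := by ring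
  have hh : ‖h‖ ≤ α * L := le_of_sq_le_mul (by positivity) <| by
    nlinarith [hjulia z hzb, mul_le_mul_of_nonneg_left hq hL0]
  nlinarith [mul_le_mul_of_nonneg_left hh hα]

theorem hasKLimit_diffQuotient (hpsd : SchurAglerKernelPos φ)
    (hφmap : ∀ z ∈ ball (0 : 𝔼 d) 1, φ z ∈ ball (0 : 𝔼 d') 1)
    (hζ : ‖ζ‖ = 1) (hω : ‖ω‖ ≤ 1) (hL0 : 0 ≤ L)
    {U : Filter (𝔼 d)} [U.NeBot] (hU : U ≤ 𝓝[ball (0 : 𝔼 d) 1] ζ)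
    (hUq : Tendsto (juliaQuotient φ) U (𝓝 L)) (hUφ : Tendsto φ U (𝓝 ω))
    (hKφ : HasKLimit φ ζ ω)
    (hq : Tendsto (fun t : ℝ => juliaQuotient φ ((t : ℂ) • ζ)) (𝓝[<] 1) (𝓝 L))
    (hh : Tendsto (fun t : ℝ => diffQuotient (fun v => ⟪ω, φ v⟫) ζ ((t : ℂ) • ζ)) (𝓝[<] 1)
      (𝓝 (L : ℂ))) :
    HasKLimit (diffQuotient (fun v => ⟪ω, φ v⟫) ζ) ζ (L : ℂ) := by
  set h := diffQuotient (fun v => ⟪ω, φ v⟫) ζ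
  have hB : Tendsto (fun t : ℝ => L - 2 * (h ((t : ℂ) • ζ)).re + juliaQuotient φ ((t : ℂ) • ζ))
      (𝓝[<] 1) (𝓝 0) := by
    have := ((tendsto_const_nhds (x := L)).sub
      (((Complex.continuous_re.tendsto _).comp hh).const_mul 2)).add hq
    rwa [Complex.ofReal_re, show L - 2 * L + L = 0 by ring] at this
  intro α hα
  -- Approximate `h` by `K(w, ·)` for a radial point `w` near `ζ`: the three-point inequality
  -- makes the error uniformly small on the Koranyi region, while `K(w, z) → conj (h w) ≈ L`.
  refine tendsto_of_forall_exists_approx fun ε hε => ?_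
  have hBε : ∀ᶠ t : ℝ in 𝓝[<] 1,
      |L - 2 * (h ((t : ℂ) • ζ)).re + juliaQuotient φ ((t : ℂ) • ζ)| * (α ^ 2 * L) < ε ^ 2 := by
    have := hB.abs.mul_const (α ^ 2 * L)
    rw [abs_zero, zero_mul] at this
    exact this.eventually (gt_mem_nhds (pow_pos hε 2))
  obtain ⟨t, ht, htB, hth⟩ := ((eventually_of_mem (Ioo_mem_nhdsLT zero_lt_one) fun _ => id).and
    (hBε.and (Metric.tendsto_nhds.mp hh ε hε))).exists
  set w := (t : ℂ) • ζ
  have hw : w ∈ ball (0 : 𝔼 d) 1 := (ofReal_smul_mem_koranyi hζ ht).1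
  refine ⟨schurKernel φ w, conj (h w), ?_,
    tendsto_schurKernel nhdsWithin_le_nhds (hKφ α hα) hζ.le (mem_ball_zero_iff.mp hw), ?_⟩
  · rwa [dist_eq_norm, ← Complex.conj_ofReal, ← map_sub, Complex.norm_conj, ← dist_eq_norm]
  filter_upwards [self_mem_nhdsWithin] with z hz
  have hq0 := juliaQuotient_nonneg (mem_ball_zero_iff.mp hz.1)
    (mem_ball_zero_iff.mp (hφmap z hz.1)).le
  have hqK := juliaQuotient_le_of_mem_koranyi hφmap hζ.le hω hL0 hα.le
    (fun z hz => norm_diffQuotient_sq_le hpsd hζ.le hU hUq hUφ hz) hz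
  rw [dist_eq_norm]
  refine le_of_pow_le_pow_left₀ two_ne_zero hε.le ?_
  calc ‖h z - schurKernel φ w z‖ ^ 2
      ≤ (L - 2 * (h w).re + juliaQuotient φ w) * juliaQuotient φ z :=
        norm_diffQuotient_sub_schurKernel_sq_le hpsd hζ.le hU hUq hUφ hz.1 hw
    _ ≤ |L - 2 * (h w).re + juliaQuotient φ w| * (α ^ 2 * L) :=
        (mul_le_mul_of_nonneg_right (le_abs_self _) hq0).trans
          (mul_le_mul_of_nonneg_left hqK (abs_nonneg _))
    _ ≤ ε ^ 2 := htB.le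

end KoranyiLimit

section Derivative

variable {d : ℕ} {f : 𝔼 d → ℂ} {ζ z : 𝔼 d} {α : ℝ} {c : ℂ}

theorem inner_add_smul_self (hζ : ‖ζ‖ = 1) (μ : ℂ) : ⟪ζ, z + μ • ζ⟫ = ⟪ζ, z⟫ + μ := by
  rw [inner_add_right, inner_smul_right, inner_self_eq_norm_sq_to_K, hζ]
  simp

theorem mem_koranyi_add_smul (hα : 0 < α) (hζ : ‖ζ‖ = 1) (hz : z ∈ Koranyi α ζ) {μ : ℂ}
    (hμ : ‖μ‖ ≤ ‖1 - ⟪ζ, z⟫‖ / (3 * (α + 1))) : z + μ • ζ ∈ Koranyi (4 * α) ζ := by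
  obtain ⟨hzb, hzK⟩ := hz
  have hz1 : ‖z‖ < 1 := mem_ball_zero_iff.mp hzb
  have hs : 0 < 1 - ‖z‖ ^ 2 := by nlinarith [norm_nonneg z]
  have hμ3 : ‖μ‖ ≤ ‖1 - ⟪ζ, z⟫‖ / 3 :=
    hμ.trans (div_le_div_of_nonneg_left (norm_nonneg _) (by norm_num) (by linarith))
  have hμs : ‖μ‖ ≤ (1 - ‖z‖ ^ 2) / 6 := by
    refine hμ.trans ?_
    rw [div_le_iff₀ (by positivity)]
    nlinarith
  have hnorm : ‖z + μ • ζ‖ ≤ ‖z‖ + ‖μ‖ := by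
    simpa [norm_smul, hζ] using norm_add_le z (μ • ζ)
  have hsq : (1 - ‖z‖ ^ 2) / 2 ≤ 1 - ‖z + μ • ζ‖ ^ 2 := by
    nlinarith [norm_nonneg μ, norm_nonneg z, norm_nonneg (z + μ • ζ)]
  refine ⟨mem_ball_zero_iff.mpr (by nlinarith [norm_nonneg (z + μ • ζ)]), ?_⟩
  calc ‖1 - ⟪ζ, z + μ • ζ⟫‖ = ‖(1 - ⟪ζ, z⟫) - μ‖ := by rw [inner_add_smul_self hζ, sub_sub]
    _ ≤ ‖1 - ⟪ζ, z⟫‖ + ‖μ‖ := norm_sub_le _ _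
    _ ≤ 4 * α / 2 * ((1 - ‖z‖ ^ 2) / 2) := by nlinarith
    _ ≤ 4 * α / 2 * (1 - ‖z + μ • ζ‖ ^ 2) := by gcongr

theorem dist_add_smul_le (hζ : ‖ζ‖ = 1) {μ : ℂ} (hμ : ‖μ‖ ≤ ‖1 - ⟪ζ, z⟫‖) :
    dist (z + μ • ζ) ζ ≤ 2 * dist z ζ := by
  have hD : ‖1 - ⟪ζ, z⟫‖ ≤ dist z ζ := by
    have h1 : ⟪ζ, ζ - z⟫ = 1 - ⟪ζ, z⟫ := by
      rw [inner_sub_right, inner_self_eq_norm_sq_to_K, hζ]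
      simp
    have h2 := norm_inner_le_norm (𝕜 := ℂ) ζ (ζ - z)
    rwa [h1, hζ, one_mul, ← dist_eq_norm ζ z, dist_comm] at h2
  calc dist (z + μ • ζ) ζ ≤ dist z ζ + ‖μ‖ := by
        simpa [dist_eq_norm, add_sub_right_comm, norm_smul, hζ] using norm_add_le (z - ζ) (μ • ζ)
    _ ≤ 2 * dist z ζ := by linarith

theorem norm_one_sub_inner_pos (hζ : ‖ζ‖ ≤ 1) (hz : z ∈ ball (0 : 𝔼 d) 1) :
    0 < ‖1 - ⟪ζ, z⟫‖ :=
  norm_pos_iff.mpr (one_sub_inner_ne_zero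
    (mul_lt_one_of_nonneg_of_lt_one_right hζ (norm_nonneg _) (mem_ball_zero_iff.mp hz)))

theorem differentiableAt_diffQuotient (hf : DifferentiableOn ℂ f (ball (0 : 𝔼 d) 1))
    (hζ : ‖ζ‖ ≤ 1) (hz : z ∈ ball (0 : 𝔼 d) 1) : DifferentiableAt ℂ (diffQuotient f ζ) z := by
  have hden : DifferentiableAt ℂ (fun y => 1 - ⟪ζ, y⟫) z :=
    (innerSL ℂ ζ).differentiableAt.const_sub 1
  have hnum : DifferentiableAt ℂ (fun y => 1 - f y) z :=
    (hf.differentiableAt (isOpen_ball.mem_nhds hz)).const_sub 1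
  have := hnum.mul (hden.inv (one_sub_inner_ne_zero
    (mul_lt_one_of_nonneg_of_lt_one_right hζ (norm_nonneg _) (mem_ball_zero_iff.mp hz))))
  rwa [show diffQuotient f ζ = fun y => (1 - f y) * (1 - ⟪ζ, y⟫)⁻¹ from
    funext fun y => div_eq_mul_inv _ _]

theorem fderiv_apply_eq_diffQuotient_sub (hf : DifferentiableOn ℂ f (ball (0 : 𝔼 d) 1))
    (hζ : ‖ζ‖ = 1) (hz : z ∈ ball (0 : 𝔼 d) 1) :
    fderiv ℂ f z ζ = diffQuotient f ζ z
      - (1 - ⟪ζ, z⟫) * deriv (fun μ : ℂ => diffQuotient f ζ (z + μ • ζ)) 0 := by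
  have hA : HasDerivAt (fun μ : ℂ => z + μ • ζ) ζ 0 := by
    simpa using ((hasDerivAt_id (0 : ℂ)).smul_const ζ).const_add z
  have hz' : z + (0 : ℂ) • ζ ∈ ball (0 : 𝔼 d) 1 := by rwa [zero_smul, add_zero]
  set G := fun μ : ℂ => diffQuotient f ζ (z + μ • ζ)
  have hGd := (differentiableAt_diffQuotient hf hζ.le hz').comp (0 : ℂ) hA.differentiableAt
  have hG : HasDerivAt G (deriv G 0) 0 := hGd.hasDerivAt
  have hfA : HasDerivAt (fun μ : ℂ => f (z + μ • ζ)) (fderiv ℂ f z ζ) 0 :=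
    (hf.differentiableAt (isOpen_ball.mem_nhds hz)).hasFDerivAt.comp_hasDerivAt_of_eq 0 hA
      (by simp)
  have hprod : HasDerivAt (fun μ : ℂ => 1 - (1 - (⟪ζ, z⟫ + μ)) * G μ)
      (G 0 - (1 - ⟪ζ, z⟫) * deriv G 0) 0 := by
    have h1 : HasDerivAt (fun μ : ℂ => 1 - (⟪ζ, z⟫ + μ)) (-1) 0 := by
      simpa using ((hasDerivAt_id (0 : ℂ)).const_add ⟪ζ, z⟫).const_sub 1
    exact ((h1.mul hG).const_sub 1).congr_deriv (by simp; ring)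
  have heq : (fun μ : ℂ => f (z + μ • ζ)) =ᶠ[𝓝 0] fun μ => 1 - (1 - (⟪ζ, z⟫ + μ)) * G μ := by
    filter_upwards [hA.continuousAt.preimage_mem_nhds (isOpen_ball.mem_nhds hz')] with μ hμ
    rw [← inner_add_smul_self hζ, mul_comm,
      diffQuotient_mul_one_sub_inner hζ.le (mem_ball_zero_iff.mp hμ), sub_sub_cancel]
  rw [hfA.unique (hprod.congr_of_eventuallyEq heq)]
  simp [G]

theorem dist_fderiv_apply_diffQuotient_le (hf : DifferentiableOn ℂ f (ball (0 : 𝔼 d) 1))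
    (hζ : ‖ζ‖ = 1) (hα : 0 < α) (hz : z ∈ Koranyi α ζ) {ε : ℝ}
    (hε : ∀ μ : ℂ, ‖μ‖ < ‖1 - ⟪ζ, z⟫‖ / (3 * (α + 1)) →
      dist (diffQuotient f ζ (z + μ • ζ)) (diffQuotient f ζ z) ≤ ε) :
    dist (fderiv ℂ f z ζ) (diffQuotient f ζ z) ≤ 3 * (α + 1) * ε := by
  let G := fun μ : ℂ => diffQuotient f ζ (z + μ • ζ)
  let R := ‖1 - ⟪ζ, z⟫‖ / (3 * (α + 1))
  have hR : 0 < R := div_pos (norm_one_sub_inner_pos hζ.le hz.1) (by positivity)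
  have hGd : DifferentiableOn ℂ G (ball 0 R) := fun μ hμ => by
    have hμ' := mem_koranyi_add_smul hα hζ hz (mem_ball_zero_iff.mp hμ).le
    have hA : DifferentiableAt ℂ (fun μ : ℂ => z + μ • ζ) μ :=
      ((hasDerivAt_id μ).smul_const ζ).differentiableAt.const_add z
    exact ((differentiableAt_diffQuotient hf hζ.le hμ'.1).comp μ hA).differentiableWithinAt
  have hmaps : MapsTo G (ball 0 R) (closedBall (G 0) ε) := fun μ hμ => by
    simpa [G] using hε μ (mem_ball_zero_iff.mp hμ)
  have hderiv := Complex.norm_deriv_le_div_of_mapsTo_ball hGd hmaps hR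
  rw [fderiv_apply_eq_diffQuotient_sub hf hζ hz.1, dist_eq_norm, sub_sub_cancel_left, norm_neg,
    norm_mul]
  calc ‖1 - ⟪ζ, z⟫‖ * ‖deriv G 0‖ ≤ ‖1 - ⟪ζ, z⟫‖ * (ε / R) := by gcongr
    _ = 3 * (α + 1) * ε := by
      have := norm_one_sub_inner_pos hζ.le hz.1
      simp only [R]
      field_simp

theorem HasKLimit.fderiv_apply (hf : DifferentiableOn ℂ f (ball (0 : 𝔼 d) 1)) (hζ : ‖ζ‖ = 1)
    (hK : HasKLimit (diffQuotient f ζ) ζ c) : HasKLimit (fun z => fderiv ℂ f z ζ) ζ c := by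
  intro α hα
  refine tendsto_of_forall_exists_approx fun ε hε => ⟨diffQuotient f ζ, c, by simpa using hε,
    hK α hα, ?_⟩
  set ε' := ε / (3 * (α + 1))
  obtain ⟨ρ, hρ, hK4⟩ :=
    Metric.tendsto_nhdsWithin_nhds.mp (hK (4 * α) (by positivity)) (ε' / 2) (by positivity)
  filter_upwards [self_mem_nhdsWithin,
    nhdsWithin_le_nhds (ball_mem_nhds ζ (half_pos hρ))] with z hzK hzρ
  have hclose : ∀ μ : ℂ, ‖μ‖ < ‖1 - ⟪ζ, z⟫‖ / (3 * (α + 1)) →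
      dist (diffQuotient f ζ (z + μ • ζ)) c < ε' / 2 := fun μ hμ => by
    refine hK4 (mem_koranyi_add_smul hα hζ hzK hμ.le) ?_
    have h3 : ‖1 - ⟪ζ, z⟫‖ / (3 * (α + 1)) ≤ ‖1 - ⟪ζ, z⟫‖ :=
      div_le_self (norm_nonneg _) (by linarith)
    linarith [dist_add_smul_le hζ (hμ.le.trans h3), mem_ball.mp hzρ]
  have hR : 0 < ‖1 - ⟪ζ, z⟫‖ / (3 * (α + 1)) :=
    div_pos (norm_one_sub_inner_pos hζ.le hzK.1) (by positivity)
  have hz0 : dist (diffQuotient f ζ z) c < ε' / 2 := by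
    simpa using hclose 0 (by simpa using hR)
  calc dist (fderiv ℂ f z ζ) (diffQuotient f ζ z) ≤ 3 * (α + 1) * ε' :=
        dist_fderiv_apply_diffQuotient_le hf hζ hα hzK fun μ hμ =>
          (dist_triangle_right _ _ c).trans (by linarith [hclose μ hμ])
    _ = ε := by
      simp only [ε']
      field_simp

end Derivative

/-- If `φ ∈ S(n,m)` satisfies condition (C) at `e₁` with
`L = liminf_{z→e₁}(1-‖φ(z)‖²)/(1-‖z‖²) < ∞` and `φ` has K-limit `e₁` at `e₁` (after
rotations), then the directional derivative `D₁φ₁(z)` of the first component of `φ`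
in the `e₁` direction has K-limit `L` at `e₁`. -/
theorem schur_agler_D1phi1_K_limit
    (n m : ℕ)
    (φ : EuclideanSpace ℂ (Fin (n + 1)) → EuclideanSpace ℂ (Fin (m + 1)))
    (hφmap : ∀ z ∈ ball (0 : EuclideanSpace ℂ (Fin (n + 1))) 1,
      φ z ∈ ball (0 : EuclideanSpace ℂ (Fin (m + 1))) 1)
    (hφhol : DifferentiableOn ℂ φ (ball (0 : EuclideanSpace ℂ (Fin (n + 1))) 1))
    (hpsd : SchurAglerKernelPos φ)
    (L : ℝ)
    (hfin : ∃ C : ℝ, ∃ᶠ z in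
      𝓝[ball (0 : EuclideanSpace ℂ (Fin (n + 1))) 1]
        (EuclideanSpace.single (0 : Fin (n + 1)) (1 : ℂ)),
      (1 - ‖φ z‖ ^ 2) / (1 - ‖z‖ ^ 2) ≤ C)
    (hL : Filter.liminf (fun z => (1 - ‖φ z‖ ^ 2) / (1 - ‖z‖ ^ 2))
      (𝓝[ball (0 : EuclideanSpace ℂ (Fin (n + 1))) 1]
        (EuclideanSpace.single (0 : Fin (n + 1)) (1 : ℂ))) = L)
    (hKlim : HasKLimit φ (EuclideanSpace.single (0 : Fin (n + 1)) (1 : ℂ))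
      (EuclideanSpace.single (0 : Fin (m + 1)) (1 : ℂ))) :
    HasKLimit
      (fun z => fderiv ℂ (fun w => (φ w 0 : ℂ)) z
        (EuclideanSpace.single (0 : Fin (n + 1)) (1 : ℂ)))
      (EuclideanSpace.single (0 : Fin (n + 1)) (1 : ℂ)) (L : ℂ) := by
  set ζ : 𝔼 (n + 1) := EuclideanSpace.single 0 1
  set ω : 𝔼 (m + 1) := EuclideanSpace.single 0 1
  have hζ : ‖ζ‖ = 1 := by simp [ζ]
  have hω : ‖ω‖ = 1 := by simp [ω]
  obtain ⟨U, η, hU, hη, hUq, hUφ⟩ := exists_ultrafilter_tendsto_juliaQuotient hφmap hζ hfin hL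
  have hL0 : 0 ≤ L := ge_of_tendsto hUq (hU (juliaQuotient_eventually_nonneg hφmap))
  have hjulia := fun z hz => norm_diffQuotient_sq_le hpsd hζ.le hU hUq hUφ (z := z) hz
  obtain rfl : η = ω := eq_of_forall_norm_diffQuotient_sq_le hφmap hζ hω hη hL0
    ((hKlim 2 two_pos).comp (tendsto_ofReal_smul_koranyi hζ)) hjulia
  have hq := tendsto_juliaQuotient_ofReal_smul hφmap hζ hω.le hL0 hL hjulia
  have hh := tendsto_diffQuotient_ofReal_smul hζ hω.le hL0 hjulia hq
  have hK := hasKLimit_diffQuotient hpsd hφmap hζ hω.le hL0 hU hUq hUφ hKlim hq hh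
  have hcoord : (fun w => φ w 0) = fun w => ⟪ω, φ w⟫ := by
    ext w
    simp [ω, EuclideanSpace.inner_single_left]
  rw [hcoord]
  exact hK.fderiv_apply ((innerSL ℂ ω).differentiable.comp_differentiableOn hφhol) hζ
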